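/- arXiv:2302.14040 — 2 statements merged into one kernel-verified Lean document; each statement's English description precedes it below -/
import Mathlib

section
/- For a single matrix X ∈ ℝ^{n×m} with n, m ≥ 2, any linear map T : ℝ^{n×m} → ℝ^{n×m} that is equivariant to the action (σ, τ)·X = (X_{σ⁻¹(j), τ⁻¹(k)})_{jk} of S_n × S_m is of the form T(X)_{jk} = a·Σ_{p,q} X_{pq} + b·Σ_p X_{pk} + c·Σ_q X_{jq} + d·X_{jk} for some scalars a, b, c, d. -/
/-!
By linearity `T` is determined by the numbers `T (single p q 1) i j`. Equivariance makes them
invariant under `(i, p) ↦ (σ i, σ p)`, `(j, q) ↦ (τ j, τ q)`, and since a symmetric group acts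
transitively on pairs of equal and on pairs of distinct points, they depend only on whether
`p = i` and whether `q = j`. Summing `X p q` against these four values gives the four terms.
-/

open Finset Equiv

theorem Equiv.Perm.exists_apply_eq_and_apply_eq {α : Type*} {a b c d : α} (h : a = b ↔ c = d) :
    ∃ σ : Perm α, σ a = c ∧ σ b = d := by
  classical
  by_cases hab : a = b
  · obtain rfl := hab
    obtain rfl := h.mp rfl
    exact ⟨swap a c, swap_apply_left a c, swap_apply_left a c⟩
  · exact MulAction.is_two_pretransitive_iff.mp (Perm.isMultiplyPretransitive α 2) hab
      (mt h.mpr hab)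

section

variable {ι κ R : Type*} [DecidableEq ι] [DecidableEq κ] [CommRing R]

theorem LinearMap.apply_eq_sum_single [Fintype ι] [Fintype κ] {M : Type*} [AddCommMonoid M]
    [Module R M] (T : Matrix ι κ R →ₗ[R] M) (X : Matrix ι κ R) :
    T X = ∑ p, ∑ q, X p q • T (Matrix.single p q 1) := by
  conv_lhs => rw [X.matrix_eq_sum_single]
  simp only [map_sum, ← map_smul, Matrix.smul_single, smul_eq_mul, mul_one]

theorem sum_sum_mul_pattern [Fintype ι] [Fintype κ] (g : Bool → Bool → R) (X : Matrix ι κ R)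
    (i : ι) (j : κ) :
    ∑ p, ∑ q, X p q * g (decide (p = i)) (decide (q = j)) =
      g false false * (∑ p, ∑ q, X p q) + (g false true - g false false) * (∑ p, X p j)
        + (g true false - g false false) * (∑ q, X i q)
        + (g true true - g true false - g false true + g false false) * X i j := by
  have hg : ∀ p q, g (decide (p = i)) (decide (q = j)) = g false false
      + (if q = j then g false true - g false false else 0)
      + (if p = i then g true false - g false false else 0)
      + (if p = i ∧ q = j then g true true - g true false - g false true + g false false
          else 0) := by
    intro p q
    by_cases hp : p = i <;> by_cases hq : q = j <;>
      simp only [hp, hq, decide_true, decide_false, ↓reduceIte, and_self, and_true, and_false,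
        add_zero] <;> ring
  simp only [hg, mul_add, sum_add_distrib, mul_ite, mul_zero, ite_and, sum_ite_eq', mem_univ,
    ↓reduceIte, sum_ite_irrel, sum_const_zero, ← sum_mul]
  ring

theorem apply_single_perm (T : Matrix ι κ R →ₗ[R] Matrix ι κ R)
    (hT : ∀ (σ : Perm ι) (τ : Perm κ) (X : Matrix ι κ R),
      T (X.submatrix σ τ) = (T X).submatrix σ τ)
    (σ : Perm ι) (τ : Perm κ) (i : ι) (j : κ) (p : ι) (q : κ) :
    T (Matrix.single (σ p) (τ q) 1) (σ i) (τ j) = T (Matrix.single p q 1) i j := by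
  simpa using (congr_fun₂ (hT σ τ (Matrix.single (σ p) (τ q) 1)) i j).symm

theorem exists_apply_single_eq_pattern (T : Matrix ι κ R →ₗ[R] Matrix ι κ R)
    (hT : ∀ (σ : Perm ι) (τ : Perm κ) (X : Matrix ι κ R),
      T (X.submatrix σ τ) = (T X).submatrix σ τ) :
    ∃ g : Bool → Bool → R, ∀ i j p q,
      T (Matrix.single p q 1) i j = g (decide (p = i)) (decide (q = j)) := by
  let pattern : (ι × κ) × (ι × κ) → Bool × Bool := fun x =>
    (decide (x.2.1 = x.1.1), decide (x.2.2 = x.1.2))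
  let coeff : (ι × κ) × (ι × κ) → R := fun x =>
    T (Matrix.single x.2.1 x.2.2 1) x.1.1 x.1.2
  have hfac : coeff.FactorsThrough pattern := by
    rintro ⟨⟨i, j⟩, ⟨p, q⟩⟩ ⟨⟨i', j'⟩, ⟨p', q'⟩⟩ h
    simp only [pattern, Prod.mk.injEq, decide_eq_decide] at h
    obtain ⟨σ, rfl, rfl⟩ := Perm.exists_apply_eq_and_apply_eq h.1
    obtain ⟨τ, rfl, rfl⟩ := Perm.exists_apply_eq_and_apply_eq h.2
    exact (apply_single_perm T hT σ τ i j p q).symm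
  exact ⟨fun P Q => Function.extend pattern coeff 0 (P, Q),
    fun i j p q => (hfac.extend_apply 0 ((i, j), (p, q))).symm⟩

theorem exists_apply_eq_of_equivariant [Fintype ι] [Fintype κ]
    (T : Matrix ι κ R →ₗ[R] Matrix ι κ R)
    (hT : ∀ (σ : Perm ι) (τ : Perm κ) (X : Matrix ι κ R),
      T (X.submatrix σ τ) = (T X).submatrix σ τ) :
    ∃ a b c d : R, ∀ (X : Matrix ι κ R) (i : ι) (j : κ),
      T X i j = a * (∑ p, ∑ q, X p q) + b * (∑ p, X p j) + c * (∑ q, X i q) + d * X i j := by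
  obtain ⟨g, hg⟩ := exists_apply_single_eq_pattern T hT
  refine ⟨g false false, g false true - g false false, g true false - g false false,
    g true true - g true false - g false true + g false false, fun X i j => ?_⟩
  rw [← sum_sum_mul_pattern, T.apply_eq_sum_single X]
  simp [Matrix.sum_apply, hg]

end

theorem equivariant_linear_map_form_general (n m : ℕ)
    (T : Matrix (Fin n) (Fin m) ℝ →ₗ[ℝ] Matrix (Fin n) (Fin m) ℝ)
    (hT : ∀ (σ : Equiv.Perm (Fin n)) (τ : Equiv.Perm (Fin m))
        (X : Matrix (Fin n) (Fin m) ℝ),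
      T (fun j k => X (σ⁻¹ j) (τ⁻¹ k)) = fun j k => T X (σ⁻¹ j) (τ⁻¹ k)) :
    ∃ a b c d : ℝ, ∀ (X : Matrix (Fin n) (Fin m) ℝ) (j : Fin n) (k : Fin m),
      T X j k = a * (∑ p, ∑ q, X p q) + b * (∑ p, X p k)
        + c * (∑ q, X j q) + d * X j k :=
  exists_apply_eq_of_equivariant T fun σ τ X => by
    have := hT σ⁻¹ τ⁻¹ X
    rwa [inv_inv, inv_inv] at this

/-- Any linear map `T : ℝ^{n×m} → ℝ^{n×m}` equivariant to the row-and-column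
permutation action of `S_n × S_m` (for `n, m ≥ 2`) is of the form
`T(X)_{jk} = a·Σ_{p,q} X_{pq} + b·Σ_p X_{pk} + c·Σ_q X_{jq} + d·X_{jk}`. -/
theorem equivariant_linear_map_form (n m : ℕ) (hn : 2 ≤ n) (hm : 2 ≤ m)
    (T : Matrix (Fin n) (Fin m) ℝ →ₗ[ℝ] Matrix (Fin n) (Fin m) ℝ)
    (hT : ∀ (σ : Equiv.Perm (Fin n)) (τ : Equiv.Perm (Fin m))
        (X : Matrix (Fin n) (Fin m) ℝ),
      T (fun j k => X (σ⁻¹ j) (τ⁻¹ k)) = fun j k => T X (σ⁻¹ j) (τ⁻¹ k)) :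
    ∃ a b c d : ℝ, ∀ (X : Matrix (Fin n) (Fin m) ℝ) (j : Fin n) (k : Fin m),
      T X j k = a * (∑ p, ∑ q, X p q) + b * (∑ p, X p k)
        + c * (∑ q, X j q) + d * X j k :=
  equivariant_linear_map_form_general n m T hT
end

section
/- For a linear map T : ℝ^{n×m} → ℝ^{n×m} that is equivariant to row permutations only (the action σ·X = (X_{σ⁻¹(j),k})_{jk} of S_n, with n ≥ 2), the matrix of T in the standard basis has entries constant on the orbits determined by: for each fixed pair of column indices (k,q), whether the row indices satisfy j = p or j ≠ p. Consequently, any such T has the form T(X)_{jk} = Σ_q (A_{kq} Σ_{p≠j} X_{pq} + B_{kq} X_{jq}) for some matrices A, B ∈ ℝ^{m×m}. -/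
open Finset

/-- Any linear map `T : ℝ^{n×m} → ℝ^{n×m}` that is equivariant to row
permutations only (the action of `S_n` with columns fixed, `n ≥ 2`) has the
form `T(X)_{jk} = Σ_q (A_{kq}·Σ_{p≠j} X_{pq} + B_{kq}·X_{jq})` for some
matrices `A, B ∈ ℝ^{m×m}`. -/
theorem row_equivariant_linear_map_form (n m : ℕ) (hn : 2 ≤ n)
    (T : Matrix (Fin n) (Fin m) ℝ →ₗ[ℝ] Matrix (Fin n) (Fin m) ℝ)
    (hT : ∀ (σ : Equiv.Perm (Fin n)) (X : Matrix (Fin n) (Fin m) ℝ),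
      T (fun j k => X (σ⁻¹ j) k) = fun j k => T X (σ⁻¹ j) k) :
    ∃ A B : Matrix (Fin m) (Fin m) ℝ,
      ∀ (X : Matrix (Fin n) (Fin m) ℝ) (j : Fin n) (k : Fin m),
        T X j k = ∑ q, (A k q * ∑ p ∈ Finset.univ.erase j, X p q + B k q * X j q) := by
  have h0 : (0:ℕ) < n := by omega
  have h1 : (1:ℕ) < n := by omega
  set z : Fin n := ⟨0, h0⟩ with hz
  set o : Fin n := ⟨1, h1⟩ with ho
  have hzo : z ≠ o := by simp [hz, ho, Fin.ext_iff]
  set E : Fin n → Fin m → Matrix (Fin n) (Fin m) ℝ :=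
    fun p q => Matrix.single p q 1 with hE
  have key : ∀ (σ : Equiv.Perm (Fin n)) (p : Fin n) (q : Fin m) (j : Fin n) (k : Fin m),
      T (E (σ p) q) (σ j) k = T (E p q) j k := by
    intro σ p q j k
    have h := hT σ (E p q)
    have hEeq : (fun a b => E p q (σ⁻¹ a) b) = E (σ p) q := by
      funext a b
      simp only [hE, Matrix.single, Matrix.of_apply, Equiv.Perm.inv_def, Equiv.eq_symm_apply]
    rw [hEeq] at h
    have := congrFun (congrFun h (σ j)) k
    simpa using this
  have offdiag : ∀ (p j : Fin n) (q : Fin m) (k : Fin m), p ≠ j →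
      T (E p q) j k = T (E o q) z k := by
    intro p j q k hpj
    have hτ : Equiv.swap z j p ≠ z := by
      intro hc
      apply hpj
      have := congrArg (Equiv.swap z j) hc
      simpa [Equiv.swap_apply_left] using this
    set σ : Equiv.Perm (Fin n) := (Equiv.swap o (Equiv.swap z j p)).trans (Equiv.swap z j) with hσ
    have hσz : σ z = j := by
      simp only [hσ, Equiv.trans_apply]
      rw [Equiv.swap_apply_of_ne_of_ne hzo (Ne.symm hτ), Equiv.swap_apply_left]
    have hσo : σ o = p := by
      simp [hσ, Equiv.swap_apply_left]
    have := key σ o q z k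
    rw [hσz, hσo] at this
    exact this
  have diag : ∀ (j : Fin n) (q : Fin m) (k : Fin m),
      T (E j q) j k = T (E z q) z k := by
    intro j q k
    have := key (Equiv.swap z j) z q z k
    simpa [Equiv.swap_apply_left] using this
  refine ⟨fun k q => T (E o q) z k, fun k q => T (E z q) z k, ?_⟩
  intro X j k
  have hX : X = ∑ p, ∑ q, X p q • E p q := by
    funext a b
    simp [hE, Matrix.sum_apply, Matrix.single, Matrix.of_apply, Pi.smul_apply,
      smul_eq_mul, ite_and, mul_ite, mul_one, mul_zero, Finset.sum_ite_eq',
      Finset.sum_ite_eq]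
  have expand : T X j k = ∑ p, ∑ q, X p q * T (E p q) j k := by
    conv_lhs => rw [hX]
    rw [map_sum]
    simp [map_sum, map_smul, Finset.sum_apply, Matrix.sum_apply, Pi.smul_apply,
      Matrix.smul_apply, smul_eq_mul]
  rw [expand, Finset.sum_comm]
  refine Finset.sum_congr rfl fun q _ => ?_
  rw [← Finset.add_sum_erase _ _ (Finset.mem_univ j), diag j q k]
  rw [Finset.sum_congr rfl (fun p hp => by
    rw [offdiag p j q k (Finset.ne_of_mem_erase hp)]), ← Finset.sum_mul]
  ring
end
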